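/- Over Z/2, for every integer i ≥ 1, the identity Σ_{a=0}^{i−1} y(i−a) ∧ y(i+a+1) = 0 holds in the exterior algebra, where y(j) := Σ_{r=0}^{j−1} e_{2j−2r−1} ∧ e_{2j+2r+1}. -/
import Mathlib


noncomputable section

/-- Ground field `Z/2`. -/
abbrev K2 := ZMod 2

/-- The free `Z/2`-module on basis `(e_i)_{i ≥ 1}`. -/
abbrev V1 := {i : ℕ // 1 ≤ i} →₀ K2

/-- The exterior algebra over `Z/2` on the space with basis `(e_i)_{i ≥ 1}`. -/
abbrev Lam1 := ExteriorAlgebra K2 V1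

/-- The generator `e_i` (defined to be `0` for the irrelevant case `i = 0`). -/
noncomputable def E (i : ℕ) : Lam1 :=
  if h : 1 ≤ i then ExteriorAlgebra.ι K2 (Finsupp.single (⟨i, h⟩ : {i : ℕ // 1 ≤ i}) 1)
  else 0

/-- The coboundary of a generator:
`δ₁(e_i) = Σ_{a+b=i, 1 ≤ a < b} (a+b) e_a ∧ e_b`, coefficients mod 2. -/
noncomputable def δE (i : ℕ) : Lam1 :=
  ∑ a ∈ Finset.Ico 1 i, if a < i - a then (i : K2) • (E a * E (i - a)) else 0

/-- `y(j) = Σ_{r=0}^{j−1} e_{2j−2r−1} ∧ e_{2j+2r+1}`. -/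
noncomputable def yC (j : ℕ) : Lam1 :=
  ∑ r ∈ Finset.range j, E (2 * j - 2 * r - 1) * E (2 * j + 2 * r + 1)

/-! ### Auxiliary lemmas -/

lemma addself (x : Lam1) : x + x = 0 := by
  have h : (2 : K2) • x = x + x := two_smul K2 x
  have h2 : (2 : K2) = 0 := by decide
  rw [h2, zero_smul] at h
  exact h.symm

lemma eq_of_add_eq_zero'' {x y : Lam1} (h : x + y = 0) : x = y := by
  calc x = x + (y + y) := by rw [addself, add_zero]
  _ = (x + y) + y := by rw [add_assoc]
  _ = y := by rw [h, zero_add]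

lemma E_mul_self (a : ℕ) : E a * E a = 0 := by
  unfold E
  split
  · exact ExteriorAlgebra.ι_sq_zero _
  · simp

lemma E_comm (a b : ℕ) : E a * E b = E b * E a := by
  apply eq_of_add_eq_zero''
  unfold E
  split <;> split <;> simp

noncomputable def W (a b c d : ℕ) : Lam1 := E a * E b * (E c * E d)

lemma W_swap12 (a b c d : ℕ) : W a b c d = W b a c d := by unfold W; rw [E_comm a b]

lemma W_swap34 (a b c d : ℕ) : W a b c d = W a b d c := by unfold W; rw [E_comm c d]

lemma W_swap23 (a b c d : ℕ) : W a b c d = W a c b d := by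
  unfold W
  rw [mul_assoc, ← mul_assoc (E b), E_comm b c, mul_assoc (E c), ← mul_assoc]

lemma W_block (a b c d : ℕ) : W a b c d = W c d a b := by
  rw [W_swap23, W_swap12, W_swap34, W_swap23]

lemma W_minmax (a b c d : ℕ) : W (min a b) (max a b) (min c d) (max c d) = W a b c d := by
  rcases le_total a b with h | h <;> rcases le_total c d with h' | h'
  · rw [min_eq_left h, max_eq_right h, min_eq_left h', max_eq_right h']
  · rw [min_eq_left h, max_eq_right h, min_eq_right h', max_eq_left h', ← W_swap34]
  · rw [min_eq_right h, max_eq_left h, min_eq_left h', max_eq_right h', ← W_swap12]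
  · rw [min_eq_right h, max_eq_left h, min_eq_right h', max_eq_left h', ← W_swap12, ← W_swap34]

lemma W_zero13 (a b d : ℕ) : W a b a d = 0 := by
  rw [W_swap23]; unfold W; rw [E_mul_self, zero_mul]

lemma W_zero14 (a b c : ℕ) : W a b c a = 0 := by
  rw [W_swap34]; exact W_zero13 a b c

lemma W_zero23 (a b d : ℕ) : W a b b d = 0 := by
  rw [W_swap12]; exact W_zero13 b a d

lemma W_zero24 (a b c : ℕ) : W a b c b = 0 := by
  rw [W_swap34]; exact W_zero23 a b c

/-- `yC` as a sum over odd `u < 2j` of `e_u e_{4j-u}`. -/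
lemma yC_eq (j : ℕ) :
    yC j = ∑ u ∈ (Finset.range (2*j)).filter (fun u => u % 2 = 1), E u * E (4*j - u) := by
  unfold yC
  refine Finset.sum_bij' (fun r _ => 2*j - 2*r - 1) (fun u _ => (2*j - 1 - u)/2)
    ?_ ?_ ?_ ?_ ?_
  · intro r hr
    simp only [Finset.mem_range] at hr
    simp only [Finset.mem_filter, Finset.mem_range]
    omega
  · intro u hu
    simp only [Finset.mem_filter, Finset.mem_range] at hu
    simp only [Finset.mem_range]
    omega
  · intro r hr
    simp only [Finset.mem_range] at hr
    omega
  · intro u hu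
    simp only [Finset.mem_filter, Finset.mem_range] at hu
    omega
  · intro r hr
    simp only [Finset.mem_range] at hr
    have h1 : 2 * j - 2 * r - 1 = 2*j - 2*r - 1 := rfl
    have h2 : 2 * j + 2 * r + 1 = 4*j - (2*j - 2*r - 1) := by omega
    rw [h2]

lemma sigma_eq_iff (a b c a' b' c' : ℕ) :
    (⟨a, b, c⟩ : Σ _ : ℕ, Σ _ : ℕ, ℕ) = ⟨a', b', c'⟩ ↔ (a = a' ∧ b = b' ∧ c = c') := by
  constructor
  · intro h
    injection h with h1 h2
    injection h2 with h3 h4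
    exact ⟨h1, h3, h4⟩
  · rintro ⟨rfl, rfl, rfl⟩; rfl

/-- Pairing helper: given two pairs with sums divisible by 4, produce the canonical
index triple (the pair of smaller sum comes first). -/
def pU (i : ℕ) (X Y Z W : ℕ) : Σ _ : ℕ, Σ _ : ℕ, ℕ :=
  if X + Y < Z + W then ⟨i - (X+Y)/4, min X Y, min Z W⟩
  else ⟨i - (Z+W)/4, min Z W, min X Y⟩

/-- The involution on index triples. -/
def gg (i : ℕ) : (Σ _ : ℕ, Σ _ : ℕ, ℕ) → (Σ _ : ℕ, Σ _ : ℕ, ℕ)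
  | ⟨a, u, v⟩ =>
    if u = v ∨ u = 4*(i+a+1) - v ∨ 4*(i-a) - u = v ∨ 4*(i-a) - u = 4*(i+a+1) - v then ⟨a, u, v⟩
    else if (u + v) % 4 = 0 then pU i u v (4*(i-a) - u) (4*(i+a+1) - v)
    else pU i u (4*(i+a+1) - v) (4*(i-a) - u) v

lemma gg_spec (i a1 u1 v1 B1 D1 : ℕ) (hB1 : 4*(i-a1) - u1 = B1) (hD1 : 4*(i+a1+1) - v1 = D1) :
    gg i ⟨a1, u1, v1⟩ = if u1 = v1 ∨ u1 = D1 ∨ B1 = v1 ∨ B1 = D1 then ⟨a1, u1, v1⟩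
      else if (u1 + v1) % 4 = 0 then
        (if u1 + v1 < B1 + D1 then ⟨i - (u1+v1)/4, min u1 v1, min B1 D1⟩
         else ⟨i - (B1+D1)/4, min B1 D1, min u1 v1⟩)
      else
        (if u1 + D1 < B1 + v1 then ⟨i - (u1+D1)/4, min u1 D1, min B1 v1⟩
         else ⟨i - (B1+v1)/4, min B1 v1, min u1 D1⟩) := by
  subst hB1; subst hD1; rfl

/-- The index set. -/
def TT (i : ℕ) : Finset (Σ _ : ℕ, Σ _ : ℕ, ℕ) :=
  (Finset.range i).sigma fun a =>
    ((Finset.range (2*(i-a))).filter (fun u => u % 2 = 1)).sigma fun _ =>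
      (Finset.range (2*(i+a+1))).filter (fun v => v % 2 = 1)

/-- The summand. -/
noncomputable def FF (i : ℕ) : (Σ _ : ℕ, Σ _ : ℕ, ℕ) → Lam1
  | ⟨a, u, v⟩ => W u (4*(i-a) - u) v (4*(i+a+1) - v)

set_option maxHeartbeats 1000000 in
/-- Master lemma: applying `gg` to a mixed re-pairing recovers the original triple. -/
lemma gg_eq (i a u v B D a1 u1 v1 : ℕ)
    (hai : a < i)
    (hu : u % 2 = 1) (hv : v % 2 = 1)
    (huB : u + B = 4*(i-a)) (hvD : v + D = 4*(i+a+1))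
    (huB' : u < B) (hvD' : v < D)
    (h1 : u ≠ v) (h2 : u ≠ D) (h3 : B ≠ v) (h4 : B ≠ D)
    (hmix : (u1 = min u v ∧ v1 = min B D ∧ a1 = i - (u+v)/4 ∧ u + v < B + D ∧ (u+v) % 4 = 0) ∨
            (u1 = min B D ∧ v1 = min u v ∧ a1 = i - (B+D)/4 ∧ B + D < u + v ∧ (u+v) % 4 = 0) ∨
            (u1 = min u D ∧ v1 = min B v ∧ a1 = i - (u+D)/4 ∧ u + D < B + v ∧ (u+v) % 4 = 2) ∨
            (u1 = min B v ∧ v1 = min u D ∧ a1 = i - (B+v)/4 ∧ B + v < u + D ∧ (u+v) % 4 = 2)) :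
    gg i ⟨a1, u1, v1⟩ = ⟨a, u, v⟩ := by
  obtain ⟨rfl, rfl, rfl, h, ht⟩ | ⟨rfl, rfl, rfl, h, ht⟩ | ⟨rfl, rfl, rfl, h, ht⟩ |
      ⟨rfl, rfl, rfl, h, ht⟩ := hmix
  · rw [gg_spec i _ _ _ (max u v) (max B D) (by omega) (by omega), if_neg (by omega)]
    split_ifs <;> rw [sigma_eq_iff] <;> refine ⟨by omega, by omega, by omega⟩
  · rw [gg_spec i _ _ _ (max B D) (max u v) (by omega) (by omega), if_neg (by omega)]
    split_ifs <;> rw [sigma_eq_iff] <;> refine ⟨by omega, by omega, by omega⟩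
  · rw [gg_spec i _ _ _ (max u D) (max B v) (by omega) (by omega), if_neg (by omega)]
    split_ifs <;> rw [sigma_eq_iff] <;> refine ⟨by omega, by omega, by omega⟩
  · rw [gg_spec i _ _ _ (max B v) (max u D) (by omega) (by omega), if_neg (by omega)]
    split_ifs <;> rw [sigma_eq_iff] <;> refine ⟨by omega, by omega, by omega⟩

set_option maxHeartbeats 1600000 in
set_option synthInstance.maxHeartbeats 1000000 in
/-- over `Z/2`, for `i ≥ 1`, `Σ_{a=0}^{i−1} y(i−a) ∧ y(i+a+1) = 0`. -/
theorem sum_y_wedge_y (i : ℕ) (hi : 1 ≤ i) :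
    (∑ a ∈ Finset.range i, yC (i - a) * yC (i + a + 1)) = 0 := by
  classical
  have hstep : (∑ a ∈ Finset.range i, yC (i - a) * yC (i + a + 1))
      = ∑ x ∈ TT i, FF i x := by
    rw [TT, Finset.sum_sigma]
    refine Finset.sum_congr rfl fun a ha => ?_
    rw [Finset.sum_sigma, yC_eq, yC_eq, Finset.sum_mul_sum]
    refine Finset.sum_congr rfl fun u hu => Finset.sum_congr rfl fun v hv => ?_
    simp only [FF, W, mul_assoc]
  rw [hstep]
  apply Finset.sum_involution (fun x _ => gg i x)
  · -- f x + f (gg x) = 0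
    rintro ⟨a, u, v⟩ hx
    simp only [TT, Finset.mem_sigma, Finset.mem_filter, Finset.mem_range] at hx
    obtain ⟨ha, ⟨hu1, hu2⟩, hv1, hv2⟩ := hx
    show FF i ⟨a, u, v⟩ + FF i (gg i ⟨a, u, v⟩) = 0
    suffices hFF : FF i (gg i ⟨a, u, v⟩) = FF i ⟨a, u, v⟩ by
      rw [hFF]; exact addself _
    set B := 4*(i-a) - u with hBdef
    set D := 4*(i+a+1) - v with hDdef
    have huB : u + B = 4*(i-a) := by omega
    have hvD : v + D = 4*(i+a+1) := by omega
    have hFx : FF i ⟨a, u, v⟩ = W u B v D := rfl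
    have hgg := gg_spec i a u v B D (by omega) (by omega)
    by_cases hnd : u = v ∨ u = D ∨ B = v ∨ B = D
    · rw [hgg, if_pos hnd]
    · rw [hgg, if_neg hnd, hFx]
      by_cases ht : (u + v) % 4 = 0
      · rw [if_pos ht]
        rcases (by omega : u + v < B + D ∨ B + D < u + v) with h | h
        · rw [if_pos h]
          have e1 : 4*(i - (i - (u+v)/4)) - min u v = max u v := by omega
          have e2 : 4*(i + (i - (u+v)/4) + 1) - min B D = max B D := by omega
          have hFF1 : FF i ⟨i - (u+v)/4, min u v, min B D⟩
              = W (min u v) (max u v) (min B D) (max B D) := by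
            simp only [FF]; rw [e1, e2]
          rw [hFF1, W_minmax, ← W_swap23]
        · rw [if_neg (by omega)]
          have e1 : 4*(i - (i - (B+D)/4)) - min B D = max B D := by omega
          have e2 : 4*(i + (i - (B+D)/4) + 1) - min u v = max u v := by omega
          have hFF1 : FF i ⟨i - (B+D)/4, min B D, min u v⟩
              = W (min B D) (max B D) (min u v) (max u v) := by
            simp only [FF]; rw [e1, e2]
          rw [hFF1, W_minmax, W_block, ← W_swap23]
      · rw [if_neg ht]
        have ht2 : (u + v) % 4 = 2 := by omega
        rcases (by omega : u + D < B + v ∨ B + v < u + D) with h | h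
        · rw [if_pos h]
          have e1 : 4*(i - (i - (u+D)/4)) - min u D = max u D := by omega
          have e2 : 4*(i + (i - (u+D)/4) + 1) - min B v = max B v := by omega
          have hFF1 : FF i ⟨i - (u+D)/4, min u D, min B v⟩
              = W (min u D) (max u D) (min B v) (max B v) := by
            simp only [FF]; rw [e1, e2]
          rw [hFF1, W_minmax, W_swap23, W_swap34]
        · rw [if_neg (by omega)]
          have e1 : 4*(i - (i - (B+v)/4)) - min B v = max B v := by omega
          have e2 : 4*(i + (i - (B+v)/4) + 1) - min u D = max u D := by omega
          have hFF1 : FF i ⟨i - (B+v)/4, min B v, min u D⟩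
              = W (min B v) (max B v) (min u D) (max u D) := by
            simp only [FF]; rw [e1, e2]
          rw [hFF1, W_minmax, W_block, W_swap23, W_swap34]
  · -- f x ≠ 0 → gg x ≠ x
    rintro ⟨a, u, v⟩ hx hF
    simp only [TT, Finset.mem_sigma, Finset.mem_filter, Finset.mem_range] at hx
    obtain ⟨ha, ⟨hu1, hu2⟩, hv1, hv2⟩ := hx
    set B := 4*(i-a) - u with hBdef
    set D := 4*(i+a+1) - v with hDdef
    have huB : u + B = 4*(i-a) := by omega
    have hvD : v + D = 4*(i+a+1) := by omega
    have hFx : FF i ⟨a, u, v⟩ = W u B v D := rfl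
    have hnd : ¬ (u = v ∨ u = D ∨ B = v ∨ B = D) := by
      rintro (h | h | h | h) <;> apply hF <;> rw [hFx]
      · rw [h]; exact W_zero13 v B D
      · rw [h]; exact W_zero14 D B v
      · rw [h]; exact W_zero23 u v D
      · rw [h]; exact W_zero24 u D v
    have hgg := gg_spec i a u v B D (by omega) (by omega)
    show gg i ⟨a, u, v⟩ ≠ ⟨a, u, v⟩
    rw [hgg, if_neg hnd]
    split_ifs <;> intro hEq <;> rw [sigma_eq_iff] at hEq <;> omega
  · -- gg x ∈ TT i
    rintro ⟨a, u, v⟩ hx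
    simp only [TT, Finset.mem_sigma, Finset.mem_filter, Finset.mem_range] at hx
    obtain ⟨ha, ⟨hu1, hu2⟩, hv1, hv2⟩ := hx
    set B := 4*(i-a) - u with hBdef
    set D := 4*(i+a+1) - v with hDdef
    have huB : u + B = 4*(i-a) := by omega
    have hvD : v + D = 4*(i+a+1) := by omega
    have hgg := gg_spec i a u v B D (by omega) (by omega)
    show gg i ⟨a, u, v⟩ ∈ TT i
    rw [hgg]
    split_ifs <;>
      simp only [TT, Finset.mem_sigma, Finset.mem_filter, Finset.mem_range] <;>
      refine ⟨by omega, ⟨by omega, by omega⟩, by omega, by omega⟩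
  · -- gg (gg x) = x
    rintro ⟨a, u, v⟩ hx
    simp only [TT, Finset.mem_sigma, Finset.mem_filter, Finset.mem_range] at hx
    obtain ⟨ha, ⟨hu1, hu2⟩, hv1, hv2⟩ := hx
    set B := 4*(i-a) - u with hBdef
    set D := 4*(i+a+1) - v with hDdef
    have huB : u + B = 4*(i-a) := by omega
    have hvD : v + D = 4*(i+a+1) := by omega
    have huB' : u < B := by omega
    have hvD' : v < D := by omega
    have hgg := gg_spec i a u v B D (by omega) (by omega)
    show gg i (gg i ⟨a, u, v⟩) = ⟨a, u, v⟩
    by_cases hnd : u = v ∨ u = D ∨ B = v ∨ B = D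
    · have hfix : gg i ⟨a, u, v⟩ = ⟨a, u, v⟩ := by rw [hgg, if_pos hnd]
      rw [hfix, hfix]
    · rw [hgg, if_neg hnd]
      push_neg at hnd
      obtain ⟨h1, h2, h3, h4⟩ := hnd
      by_cases ht : (u + v) % 4 = 0
      · rw [if_pos ht]
        rcases (by omega : u + v < B + D ∨ B + D < u + v) with h | h
        · rw [if_pos h]
          exact gg_eq i a u v B D _ _ _ ha hu2 hv2 huB hvD huB' hvD' h1 h2 h3 h4
            (Or.inl ⟨rfl, rfl, rfl, h, ht⟩)
        · rw [if_neg (by omega)]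
          exact gg_eq i a u v B D _ _ _ ha hu2 hv2 huB hvD huB' hvD' h1 h2 h3 h4
            (Or.inr (Or.inl ⟨rfl, rfl, rfl, h, ht⟩))
      · rw [if_neg ht]
        have ht2 : (u + v) % 4 = 2 := by omega
        rcases (by omega : u + D < B + v ∨ B + v < u + D) with h | h
        · rw [if_pos h]
          exact gg_eq i a u v B D _ _ _ ha hu2 hv2 huB hvD huB' hvD' h1 h2 h3 h4
            (Or.inr (Or.inr (Or.inl ⟨rfl, rfl, rfl, h, ht2⟩)))
        · rw [if_neg (by omega)]
          exact gg_eq i a u v B D _ _ _ ha hu2 hv2 huB hvD huB' hvD' h1 h2 h3 h4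
            (Or.inr (Or.inr (Or.inr ⟨rfl, rfl, rfl, h, ht2⟩)))
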